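/- If a directed graph G is (f+1)-robust, then for any f-local set M of vertices, the subgraph induced on V \ M is 1-robust, and hence has a rooted spanning tree. -/

import Mathlib

open Finset

def rReachable {V : Type*} [DecidableEq V] (N : V → Finset V) (S : Finset V) (r : ℕ) : Prop :=
  ∃ i ∈ S, r ≤ ((N i) \ S).card

def rRobust {V : Type*} [Fintype V] [DecidableEq V] (N : V → Finset V) (r : ℕ) : Prop :=
  ∀ S₁ S₂ : Finset V, S₁.Nonempty → S₂.Nonempty → Disjoint S₁ S₂ →
    rReachable N S₁ r ∨ rReachable N S₂ r

/-!
Deleting an `f`-local set `M` removes at most `f` in-neighbours of each remaining vertex, so a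
vertex with `f + r` in-neighbours outside a set keeps `r` of them after the deletion; this turns
`(f + r)`-robustness of the graph into `r`-robustness of the induced subgraph.

In a `1`-robust graph the ancestor sets of any two vertices meet, since an ancestor set has no
in-neighbours outside itself. A vertex whose ancestor set is smallest is then an ancestor of
every vertex: it shares an ancestor `w` with any `u`, and `w` already has all of its ancestors.
-/

def IsLocal {V : Type*} [DecidableEq V] (N : V → Finset V) (M : Finset V) (f : ℕ) : Prop :=
  ∀ i ∉ M, (N i ∩ M).card ≤ f

def induceCompl {V : Type*} [DecidableEq V] (N : V → Finset V) (M : Finset V) :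
    {x : V // x ∉ M} → Finset {x : V // x ∉ M} :=
  fun i => (N i.1).subtype (· ∉ M)

section Induce

variable {V : Type*} [DecidableEq V] {N : V → Finset V} {M : Finset V}

theorem map_induceCompl_sdiff (i : {x : V // x ∉ M}) (S : Finset {x : V // x ∉ M}) :
    (induceCompl N M i \ S).map (Function.Embedding.subtype _) =
      (N i.1 \ S.map (Function.Embedding.subtype _)).filter (· ∉ M) := by
  ext x
  by_cases hx : x ∈ M <;> simp [induceCompl, hx]

theorem rReachable_induceCompl {f r : ℕ} (hloc : IsLocal N M f) {S : Finset {x : V // x ∉ M}}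
    (h : rReachable N (S.map (Function.Embedding.subtype _)) (f + r)) :
    rReachable (induceCompl N M) S r := by
  obtain ⟨_, hiS, hcard⟩ := h
  obtain ⟨i, hi, rfl⟩ := mem_map.mp hiS
  refine ⟨i, hi, ?_⟩
  set A := N i.1 \ S.map (Function.Embedding.subtype _)
  have hA_in_M : (A.filter (· ∈ M)).card ≤ f := by
    refine (card_le_card fun x hx => ?_).trans (hloc i.1 i.2)
    simp only [mem_filter, A, mem_sdiff] at hx
    exact mem_inter.mpr ⟨hx.1.1, hx.2⟩
  have hA_notin_M : (A.filter (· ∉ M)).card = (induceCompl N M i \ S).card := by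
    rw [← card_map (Function.Embedding.subtype _), map_induceCompl_sdiff]
  have hsplit := card_filter_add_card_filter_not (s := A) (· ∈ M)
  change f + r ≤ A.card at hcard
  omega

theorem rRobust.induceCompl [Fintype V] {f r : ℕ} (hrob : rRobust N (f + r))
    (hloc : IsLocal N M f) : rRobust (induceCompl N M) r := by
  intro S₁ S₂ h₁ h₂ hdisj
  exact (hrob _ _ (h₁.map (f := .subtype _)) h₂.map ((disjoint_map _).mpr hdisj)).imp
    (rReachable_induceCompl hloc) (rReachable_induceCompl hloc)

end Induce

section Ancestors

variable {V : Type*} [Fintype V] (N : V → Finset V)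

open Classical in
/-- `N i` is the in-neighbourhood of `i`, so these are the vertices with a path to `v`. -/
noncomputable def ancestors (v : V) : Finset V :=
  univ.filter fun u => Relation.ReflTransGen (fun a b => a ∈ N b) u v

variable {N}

theorem mem_ancestors {u v : V} :
    u ∈ ancestors N v ↔ Relation.ReflTransGen (fun a b => a ∈ N b) u v := by
  simp [ancestors]

theorem self_mem_ancestors (v : V) : v ∈ ancestors N v :=
  mem_ancestors.mpr .refl

theorem ancestors_subset_of_mem {v w : V} (hw : w ∈ ancestors N v) :
    ancestors N w ⊆ ancestors N v := fun _ hu =>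
  mem_ancestors.mpr ((mem_ancestors.mp hu).trans (mem_ancestors.mp hw))

theorem not_rReachable_one_ancestors [DecidableEq V] (v : V) :
    ¬ rReachable N (ancestors N v) 1 := by
  rintro ⟨i, hi, hcard⟩
  obtain ⟨j, hj⟩ := card_pos.mp hcard
  rw [mem_sdiff] at hj
  exact hj.2 (mem_ancestors.mpr (.head hj.1 (mem_ancestors.mp hi)))

theorem rRobust.not_disjoint_ancestors [DecidableEq V] (hrob : rRobust N 1) (u v : V) :
    ¬ Disjoint (ancestors N u) (ancestors N v) := fun hdisj =>
  (hrob _ _ ⟨u, self_mem_ancestors u⟩ ⟨v, self_mem_ancestors v⟩ hdisj).elim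
    (not_rReachable_one_ancestors u) (not_rReachable_one_ancestors v)

theorem rRobust.exists_root [DecidableEq V] [Nonempty V] (hrob : rRobust N 1) :
    ∃ root : V, ∀ v : V, Relation.ReflTransGen (fun a b => a ∈ N b) root v := by
  obtain ⟨root, -, hmin⟩ :=
    exists_min_image univ (fun v => (ancestors N v).card) univ_nonempty
  refine ⟨root, fun u => ?_⟩
  obtain ⟨w, hw_root, hw_u⟩ := not_disjoint_iff.mp (hrob.not_disjoint_ancestors root u)
  have heq : ancestors N w = ancestors N root :=
    eq_of_subset_of_card_le (ancestors_subset_of_mem hw_root) (hmin w (mem_univ w))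
  exact mem_ancestors.mp (ancestors_subset_of_mem hw_u (heq ▸ self_mem_ancestors root))

end Ancestors

theorem stmt10 {V : Type*} [Fintype V] [DecidableEq V]
    (N : V → Finset V) (f : ℕ) (hrob : rRobust N (f + 1))
    (M : Finset V) (hloc : ∀ i ∉ M, ((N i) ∩ M).card ≤ f)
    (hcard : 2 ≤ Fintype.card {x : V // x ∉ M}) :
    rRobust (fun i : {x : V // x ∉ M} => (N i.1).subtype (fun x => x ∉ M)) 1 ∧
    ∃ root : {x : V // x ∉ M}, ∀ v : {x : V // x ∉ M},
      Relation.ReflTransGen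
        (fun a b => a ∈ (N b.1).subtype (fun x => x ∉ M)) root v := by
  have hrob' : rRobust (induceCompl N M) 1 := hrob.induceCompl hloc
  have : Nonempty {x : V // x ∉ M} := Fintype.card_pos_iff.mp (by omega)
  exact ⟨hrob', hrob'.exists_root⟩
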